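/- Let ξ ∈ ℂ be a root of unity of order N and U an antisymmetric p×p integer matrix. The center of the quantum torus T_ξ(U) over ℂ is the monomial subalgebra A(Γ_N), where Γ_N = { k ∈ ℤ^p : ⟨k,n⟩_U ∈ Nℤ for all n ∈ ℤ^p }, and T_ξ(U) is finitely generated as a module over its center. -/

import Mathlib

/-!
The ordered monomials `x^k = x₁^{k₁} ⋯ x_p^{k_p}` are units with `x^k x^n = ξ^{⟨k,n⟩} x^n x^k`,
and `X^k` is a scalar multiple of `x^k`. Hence conjugation by `X^n` is diagonal in the basis
`(X^k)` with eigenvalue `ξ^{⟨k,n⟩}` at `X^k`; an element is central iff every such conjugation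
fixes it, i.e. iff it is supported on those `k` with `ξ^{⟨k,n⟩} = 1` for all `n`, which is `Γ_N`.
Since `ξ^N = 1`, the powers `x_i^{N m}` commute with every `x_j^r`, so writing `k = N m + r`
with `0 ≤ r_i < N` gives `X^k ∈ ℂ · X^{N m} X^r` with `X^{N m}` central: the finitely many `X^r`
generate `T_ξ(U)` over its center.
-/

open scoped BigOperators

/-- Exponent appearing in the Weyl normalization of a monomial:
`∑_{i<j} U_{ij} k_i k_j`. -/
def weylExp {p : ℕ} (U : Matrix (Fin p) (Fin p) ℤ) (k : Fin p → ℤ) : ℤ :=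
  ∑ i, ∑ j, if i < j then U i j * k i * k j else 0

/-- The ordered product `x₁^{k₁} ⋯ x_p^{k_p}`. -/
def orderedProd {p : ℕ} {A : Type} [Monoid A] (x : Fin p → Aˣ) (k : Fin p → ℤ) : A :=
  (((List.finRange p).map fun i => ((x i ^ k i : Aˣ) : A)).prod)

/-- The Weyl-normalized monomial
`X^k = q^{-(1/2)∑_{i<j} U_{ij} k_i k_j} x₁^{k₁} ⋯ x_p^{k_p}`, where `s = q^{1/2}`. -/
def normMono {R : Type} [CommRing R] {p : ℕ} {A : Type} [Ring A] [Algebra R A]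
    (s : Rˣ) (U : Matrix (Fin p) (Fin p) ℤ) (x : Fin p → Aˣ) (k : Fin p → ℤ) : A :=
  ((s ^ (-(weylExp U k)) : Rˣ) : R) • orderedProd x k

/-- The antisymmetric bilinear form `⟨k,n⟩_U = ∑_{i,j} U_{ij} k_i n_j`. -/
def formU {p : ℕ} (U : Matrix (Fin p) (Fin p) ℤ) (k n : Fin p → ℤ) : ℤ :=
  ∑ i, ∑ j, U i j * k i * n j

/-- `A` (with distinguished invertible generators `x i` and basis `b` of normalized
monomials) is the quantum torus over `R` associated to `U` with quantum parameter
`q = s²`: the generators satisfy `x_i x_j = q^{U_{ij}} x_j x_i` and the Weyl-normalized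
monomials `X^k`, `k ∈ ℤ^p`, form an `R`-basis of `A`. -/
def IsQuantumTorus {R : Type} [CommRing R] {p : ℕ} {A : Type} [Ring A] [Algebra R A]
    (s : Rˣ) (U : Matrix (Fin p) (Fin p) ℤ) (x : Fin p → Aˣ)
    (b : Module.Basis (Fin p → ℤ) R A) : Prop :=
  (∀ i j, (x i : A) * (x j : A) = ((s ^ (2 * U i j) : Rˣ) : R) • ((x j : A) * (x i : A)))
  ∧ ∀ k : Fin p → ℤ, b k = normMono s U x k

section Group

variable {G : Type*} [Group G] {w : G}

theorem zpow_mul_zpow_eq_of_mul_eq (hw : ∀ g, Commute w g) {u v : G} (h : u * v = w * (v * u))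
    (m n : ℤ) : u ^ m * v ^ n = w ^ (m * n) * (v ^ n * u ^ m) := by
  have hv : SemiconjBy u v (w * v) := by rw [SemiconjBy, h, mul_assoc]
  have hu : SemiconjBy (v ^ n) u ((w ^ n)⁻¹ * u) := by
    rw [SemiconjBy, mul_assoc, (hv.zpow_right n).eq, (hw v).mul_zpow n]
    group
  rw [(hu.zpow_right m).eq, ((hw u).zpow_left n).inv_left.mul_zpow m, ← zpow_neg, ← zpow_mul]
  group

theorem mul_list_prod_eq_of_mul_eq {ι : Type*} (hw : ∀ g, Commute w g) (u : G) (v : ι → G)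
    (e : ι → ℤ) (h : ∀ j, u * v j = w ^ e j * (v j * u)) (M : List ι) :
    u * (M.map v).prod = w ^ (M.map e).sum * ((M.map v).prod * u) := by
  induction M with
  | nil => simp
  | cons j M ih =>
    rw [List.map_cons, List.prod_cons, List.map_cons, List.sum_cons, zpow_add, ← mul_assoc, h,
      mul_assoc, mul_assoc, ih, ((hw _).zpow_left _).symm.left_comm]
    simp only [mul_assoc]

theorem list_prod_mul_list_prod_eq_of_mul_eq {κ ι : Type*} (hw : ∀ g, Commute w g)
    (u : κ → G) (v : ι → G) (e : κ → ι → ℤ) (h : ∀ i j, u i * v j = w ^ e i j * (v j * u i))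
    (L : List κ) (M : List ι) :
    (L.map u).prod * (M.map v).prod
      = w ^ (L.map fun i => (M.map (e i)).sum).sum * ((M.map v).prod * (L.map u).prod) := by
  induction L with
  | nil => simp
  | cons i L ih =>
    rw [List.map_cons, List.prod_cons, List.map_cons, List.sum_cons, zpow_add, mul_assoc, ih,
      ((hw _).zpow_left _).symm.left_comm, ← mul_assoc (u i),
      mul_list_prod_eq_of_mul_eq hw (u i) v (e i) (h i) M]
    simp only [mul_assoc]
    exact ((hw _).zpow_left _).left_comm _

end Group

theorem List.prod_map_mul_of_commute {M ι : Type*} [Monoid M] (f g : ι → M)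
    (h : ∀ i j, Commute (g i) (f j)) (L : List ι) :
    (L.map fun i => f i * g i).prod = (L.map f).prod * (L.map g).prod := by
  induction L with
  | nil => simp
  | cons i L ih =>
    have hg : Commute (g i) (L.map f).prod :=
      Commute.list_prod_right _ _ fun _ hx => by
        obtain ⟨j, -, rfl⟩ := List.mem_map.1 hx
        exact h i j
    simp only [List.map_cons, List.prod_cons, ih, mul_assoc, hg.left_comm]

section TwistedBasis

variable {K A ι : Type*} [CommRing K] [Ring A] [Algebra K A] (b : Module.Basis ι K A)
  {χ : ι → ι → K}

theorem Module.Basis.mem_center_of_forall_eq_one (hχ : ∀ j n, b j * b n = χ j n • (b n * b j))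
    {j : ι} (hj : ∀ n, χ j n = 1) : b j ∈ Subalgebra.center K A := by
  have h : LinearMap.mulLeft K (b j) = LinearMap.mulRight K (b j) :=
    b.ext fun n => by
      rw [LinearMap.mulLeft_apply, LinearMap.mulRight_apply, hχ, hj, one_smul]
  exact Subalgebra.mem_center_iff.2 fun a => (LinearMap.congr_fun h a).symm

theorem Module.Basis.repr_apply_of_apply_eq_smul (f : A →ₗ[K] A) (c : ι → K)
    (hf : ∀ j, f (b j) = c j • b j) (a : A) (j : ι) : b.repr (f a) j = c j * b.repr a j := by
  have h : b.coord j ∘ₗ f = c j • b.coord j := b.ext fun i => by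
    by_cases hij : i = j
    · subst hij; simp [hf]
    · simp [hf, Ne.symm hij]
  exact LinearMap.congr_fun h a

theorem Module.Basis.eq_one_of_mem_center [NoZeroDivisors K]
    (hχ : ∀ j n, b j * b n = χ j n • (b n * b j)) (hunit : ∀ n, IsUnit (b n))
    {a : A} (ha : a ∈ Subalgebra.center K A) {j : ι} (hj : b.repr a j ≠ 0) (n : ι) :
    χ j n = 1 := by
  obtain ⟨u, hu⟩ := hunit n
  let conj : A →ₗ[K] A := LinearMap.mulLeftRight K ((u⁻¹ : Aˣ), (u : A))
  have hconj : ∀ i, conj (b i) = χ i n • b i := fun i => by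
    rw [LinearMap.mulLeftRight_apply, hu, mul_assoc, hχ, mul_smul_comm, ← mul_assoc, ← hu,
      Units.inv_mul, one_mul]
  have hfix : conj a = a := by
    rw [LinearMap.mulLeftRight_apply, mul_assoc, ← Subalgebra.mem_center_iff.1 ha u,
      ← mul_assoc, Units.inv_mul, one_mul]
  have h := b.repr_apply_of_apply_eq_smul conj _ hconj a j
  rw [hfix] at h
  exact (mul_eq_right₀ hj).1 h.symm

theorem Module.Basis.center_eq_span [NoZeroDivisors K]
    (hχ : ∀ j n, b j * b n = χ j n • (b n * b j)) (hunit : ∀ n, IsUnit (b n)) :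
    (Subalgebra.center K A : Set A)
      = Submodule.span K {a : A | ∃ j, (∀ n, χ j n = 1) ∧ a = b j} := by
  refine subset_antisymm (fun a ha => ?_) ?_
  · rw [SetLike.mem_coe, ← b.linearCombination_repr a, Finsupp.linearCombination_apply]
    exact Submodule.finsuppSum_mem _ _ _ _ fun j hj => Submodule.smul_mem _ _
      (Submodule.subset_span ⟨j, b.eq_one_of_mem_center hχ hunit ha hj, rfl⟩)
  · rw [← Subalgebra.coe_toSubmodule, SetLike.coe_subset_coe, Submodule.span_le]
    rintro _ ⟨j, hj, rfl⟩
    exact b.mem_center_of_forall_eq_one hχ hj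

theorem Module.Finite.of_basis_mem_span {B : Subalgebra K A} {S : Set A} (hS : S.Finite)
    (h : ∀ k, b k ∈ Submodule.span B S) : Module.Finite B A := by
  refine ⟨⟨hS.toFinset, eq_top_iff.2 fun a _ => ?_⟩⟩
  have hle : Submodule.span K (Set.range b) ≤ (Submodule.span B S).restrictScalars K :=
    Submodule.span_le.2 (Set.range_subset_iff.2 h)
  rw [hS.coe_toFinset]
  exact hle (b.span_eq ▸ Submodule.mem_top)

end TwistedBasis

section OrderedZPow

variable {p : ℕ} {G : Type*} [Group G] {w : G} (x : Fin p → G)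

def orderedZPow (k : Fin p → ℤ) : G :=
  ((List.finRange p).map fun i => x i ^ k i).prod

theorem orderedZPow_mul_orderedZPow (hw : ∀ g, Commute w g) {U : Matrix (Fin p) (Fin p) ℤ}
    (hx : ∀ i j, x i * x j = w ^ U i j * (x j * x i)) (k n : Fin p → ℤ) :
    orderedZPow x k * orderedZPow x n = w ^ formU U k n * (orderedZPow x n * orderedZPow x k) := by
  have hkn : ∀ i j, x i ^ k i * x j ^ n j = w ^ (U i j * (k i * n j)) * (x j ^ n j * x i ^ k i) :=
    fun i j => by
      rw [zpow_mul]
      exact zpow_mul_zpow_eq_of_mul_eq (fun g => (hw g).zpow_left _) (hx i j) _ _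
  rw [orderedZPow, orderedZPow, list_prod_mul_list_prod_eq_of_mul_eq hw _ _ _ hkn]
  simp only [formU, Fin.sum_univ_def, mul_assoc]

theorem orderedZPow_add (k n : Fin p → ℤ) (h : ∀ i j, Commute (x i ^ n i) (x j ^ k j)) :
    orderedZPow x (k + n) = orderedZPow x k * orderedZPow x n := by
  simp only [orderedZPow, Pi.add_apply, zpow_add]
  exact List.prod_map_mul_of_commute _ _ h _

end OrderedZPow

theorem Units.commute_map_algebraMap {R A : Type*} [CommSemiring R] [Semiring A] [Algebra R A]
    (c : Rˣ) (g : Aˣ) : Commute (Units.map (algebraMap R A : R →* A) c) g :=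
  Units.ext (Algebra.commutes _ _)

namespace IsQuantumTorus

variable {R : Type} [CommRing R] {p : ℕ} {A : Type} [Ring A] [Algebra R A] {s : Rˣ}
  {U : Matrix (Fin p) (Fin p) ℤ} {x : Fin p → Aˣ} {b : Module.Basis (Fin p → ℤ) R A}

theorem units_mul_units (h : IsQuantumTorus s U x b) (i j : Fin p) :
    x i * x j = Units.map (algebraMap R A : R →* A) (s ^ 2) ^ U i j * (x j * x i) := by
  ext
  rw [Units.val_mul, Units.val_mul, h.1, ← map_zpow, Units.coe_map, MonoidHom.coe_coe,
    ← Algebra.smul_def, ← zpow_natCast, ← zpow_mul, Nat.cast_ofNat, Units.val_mul]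

theorem _root_.orderedProd_eq_val_orderedZPow (x : Fin p → Aˣ) (k : Fin p → ℤ) :
    orderedProd x k = orderedZPow x k := by
  rw [orderedProd, orderedZPow, ← Units.coeHom_apply, map_list_prod, List.map_map]
  rfl

theorem basis_eq (h : IsQuantumTorus s U x b) (k : Fin p → ℤ) :
    b k = ((s ^ (-weylExp U k) : Rˣ) : R) • ((orderedZPow x k : Aˣ) : A) := by
  rw [h.2, normMono, orderedProd_eq_val_orderedZPow]

theorem val_orderedZPow (h : IsQuantumTorus s U x b) (k : Fin p → ℤ) :
    ((orderedZPow x k : Aˣ) : A) = ((s ^ weylExp U k : Rˣ) : R) • b k := by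
  rw [h.basis_eq, smul_smul, ← Units.val_mul, ← zpow_add, add_neg_cancel, zpow_zero,
    Units.val_one, one_smul]

theorem isUnit_basis (h : IsQuantumTorus s U x b) (k : Fin p → ℤ) : IsUnit (b k) := by
  rw [h.basis_eq, Algebra.smul_def]
  exact ((Units.isUnit _).map _).mul (Units.isUnit _)

theorem basis_mul_basis (h : IsQuantumTorus s U x b) (k n : Fin p → ℤ) :
    b k * b n = (((s ^ 2) ^ formU U k n : Rˣ) : R) • (b n * b k) := by
  have hP := congrArg Units.val <| orderedZPow_mul_orderedZPow x
    (Units.commute_map_algebraMap _) h.units_mul_units k n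
  rw [Units.val_mul, Units.val_mul, Units.val_mul, ← map_zpow, Units.coe_map, MonoidHom.coe_coe,
    ← Algebra.smul_def] at hP
  rw [h.basis_eq k, h.basis_eq n, smul_mul_smul_comm, smul_mul_smul_comm, hP, smul_smul,
    smul_smul]
  congr 1
  ring

theorem exists_basis_smul_add_eq_smul_mul (h : IsQuantumTorus s U x b) {N : ℕ}
    (hq : (s ^ 2) ^ N = 1) (m r : Fin p → ℤ) : ∃ c : R, b ((N : ℤ) • m + r) = c • (b ((N : ℤ) • m) * b r) := by
  have hcomm : ∀ i j, Commute (x i ^ r i) (x j ^ ((N : ℤ) • m) j) := fun i j => by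
    rw [Commute, SemiconjBy, zpow_mul_zpow_eq_of_mul_eq
      (fun g => (Units.commute_map_algebraMap _ g).zpow_left _) (h.units_mul_units i j),
      ← zpow_mul, Pi.smul_apply, smul_eq_mul,
      show U i j * (r i * (N * m j)) = N * (U i j * r i * m j) by ring, zpow_mul, zpow_natCast,
      ← map_pow, hq, map_one, one_zpow, one_mul]
  rw [h.basis_eq, orderedZPow_add x _ _ hcomm, Units.val_mul, h.val_orderedZPow,
    h.val_orderedZPow, smul_mul_smul_comm, smul_smul]
  exact ⟨_, rfl⟩

end IsQuantumTorus

theorem formU_smul_left {p : ℕ} (U : Matrix (Fin p) (Fin p) ℤ) (c : ℤ) (k n : Fin p → ℤ) :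
    formU U (c • k) n = c * formU U k n := by
  simp only [formU, Finset.mul_sum, Pi.smul_apply, smul_eq_mul]
  exact Finset.sum_congr rfl fun i _ => Finset.sum_congr rfl fun j _ => by ring

theorem center_quantumTorus_rootOfUnity_general {p : ℕ} (U : Matrix (Fin p) (Fin p) ℤ)
    (ξ s : ℂˣ) (hs : s ^ 2 = ξ)
    (N : ℕ) (hN : 0 < N) (hord : orderOf ξ = N)
    {A : Type} [Ring A] [Algebra ℂ A]
    (x : Fin p → Aˣ) (b : Module.Basis (Fin p → ℤ) ℂ A) (h : IsQuantumTorus s U x b) :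
    (Subalgebra.center ℂ A : Set A)
      = (Submodule.span ℂ
          {a : A | ∃ k : Fin p → ℤ, (∀ n : Fin p → ℤ, (N : ℤ) ∣ formU U k n) ∧ a = b k}
          : Set A)
    ∧ Module.Finite (Subalgebra.center ℂ A) A := by
  have hmul : ∀ k n, b k * b n = ((ξ ^ formU U k n : ℂˣ) : ℂ) • (b n * b k) := by
    simpa only [hs] using h.basis_mul_basis
  have hdvd : ∀ k n, (N : ℤ) ∣ formU U k n ↔ ((ξ ^ formU U k n : ℂˣ) : ℂ) = 1 := by
    simp only [← hord, orderOf_dvd_iff_zpow_eq_one, Units.val_eq_one, implies_true]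
  refine ⟨by simp_rw [hdvd]; exact b.center_eq_span hmul h.isUnit_basis, ?_⟩
  have hN' : (0 : ℤ) < N := by exact_mod_cast hN
  refine Module.Finite.of_basis_mem_span b
    ((Set.Finite.pi fun _ => Set.finite_Ico 0 (N : ℤ)).image b) fun k => ?_
  obtain ⟨c, hc⟩ := h.exists_basis_smul_add_eq_smul_mul (hs ▸ hord ▸ pow_orderOf_eq_one ξ)
    (fun i => k i / N) (fun i => k i % N)
  have hcentral : c • b ((N : ℤ) • fun i => k i / N) ∈ Subalgebra.center ℂ A :=
    Subalgebra.smul_mem _ (b.mem_center_of_forall_eq_one hmul fun n =>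
      (hdvd _ _).1 (formU_smul_left U _ _ n ▸ dvd_mul_right _ _)) c
  have hk : ((N : ℤ) • fun i => k i / N) + (fun i => k i % N) = k :=
    funext fun i => Int.mul_ediv_add_emod (k i) N
  rw [← hk, hc, ← smul_mul_assoc]
  exact Submodule.smul_mem _ (⟨_, hcentral⟩ : Subalgebra.center ℂ A) <| Submodule.subset_span
    ⟨_, Set.mem_univ_pi.2 fun i => ⟨Int.emod_nonneg _ hN'.ne', Int.emod_lt_of_pos _ hN'⟩, rfl⟩

/-- Let `ξ ∈ ℂ` be a root of unity of order `N` and `U` antisymmetric. The center of the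
quantum torus `T_ξ(U)` is the monomial subalgebra `A(Γ_N)` where
`Γ_N = {k : ⟨k,n⟩_U ∈ Nℤ for all n}`, and `T_ξ(U)` is finitely generated as a module
over its center. -/
theorem center_quantumTorus_rootOfUnity {p : ℕ} (U : Matrix (Fin p) (Fin p) ℤ)
    (hU : ∀ i j, U j i = -U i j) (ξ s : ℂˣ) (hs : s ^ 2 = ξ)
    (N : ℕ) (hN : 0 < N) (hord : orderOf ξ = N)
    {A : Type} [Ring A] [Algebra ℂ A]
    (x : Fin p → Aˣ) (b : Module.Basis (Fin p → ℤ) ℂ A) (h : IsQuantumTorus s U x b) :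
    (Subalgebra.center ℂ A : Set A)
      = (Submodule.span ℂ
          {a : A | ∃ k : Fin p → ℤ, (∀ n : Fin p → ℤ, (N : ℤ) ∣ formU U k n) ∧ a = b k}
          : Set A)
    ∧ Module.Finite (Subalgebra.center ℂ A) A :=
  center_quantumTorus_rootOfUnity_general U ξ s hs N hN hord x b h
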